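/- Every hereditary class of finite undirected graphs closed under free amalgamation over arbitrary vertex subsets contains, for every n, the 1-subdivision of the complete graph K_n (provided it contains a single edge); consequently such a class is not quasi-wide. -/

import Mathlib

/-!
If `C` contains an edge, it contains every edgeless graph (amalgamate single vertices over
the empty set) and the path `u - x - v` (amalgamate two edges over `x`). Starting from the
`n` branch vertices, glue in the path through the middle vertex of each pair `{i, j}` by a
free amalgamation over `{i, j}`; since `C` is hereditary, `C` then contains the
1-subdivision of `K n` itself.

It is not quasi-wide for `r = 4`: delete at most `k` vertices `S` from a subdivided `K n`
and take `k² + k + 2` surviving vertices. At most `k²` of them are middle vertices with both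
ends in `S`; each of the remaining `≥ k + 2` lies within distance 1 of a surviving branch
vertex, and two of these branch vertices coincide or are joined through a surviving middle
vertex, since at most `k` of the middle vertices at one of them are deleted.
-/

/-- A bundled finite graph. -/
structure BG where
  V : Type
  [fin : Fintype V]
  G : SimpleGraph V

attribute [instance] BG.fin

/-- `C` is hereditary: closed under induced subgraphs (graph embeddings). -/
def GHereditary (C : Set BG) : Prop :=
  ∀ A ∈ C, ∀ (W : Type) [Fintype W] (H : SimpleGraph W), (H ↪g A.G) → (⟨W, H⟩ : BG) ∈ C

/-- `C` is closed under free amalgamation over arbitrary vertex subsets: for `A, B ∈ C`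
sharing a common induced subgraph `S` (via injections `f, g` inducing the same graph on
`S`), the class `C` contains the free amalgam `A ⊕_S B`, characterised up to isomorphism
by the listed properties: `A` and `B` embed into it, agreeing exactly on `S`, they cover
it, and there are no edges between `A ∖ S` and `B ∖ S`. -/
def FreeAmalgamationClosed (C : Set BG) : Prop :=
  ∀ A ∈ C, ∀ B ∈ C, ∀ (S : Type) (f : S → A.V) (g : S → B.V),
    Function.Injective f → Function.Injective g →
    (∀ s t : S, A.G.Adj (f s) (f t) ↔ B.G.Adj (g s) (g t)) →
    ∃ D ∈ C, ∃ (jA : A.G ↪g D.G) (jB : B.G ↪g D.G),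
      (∀ s : S, jA (f s) = jB (g s)) ∧
      (∀ d : D.V, (∃ a, jA a = d) ∨ (∃ b, jB b = d)) ∧
      (∀ a b, jA a = jB b → ∃ s, a = f s ∧ b = g s) ∧
      (∀ a b, D.G.Adj (jA a) (jB b) → (∃ s, a = f s) ∨ (∃ s, b = g s))

/-- The 1-subdivision of the complete graph `K n`: each edge `{i, j}` of `K n` is
replaced by a path of length 2 through a new middle vertex. -/
def subdivK (n : ℕ) : SimpleGraph (Fin n ⊕ {p : Fin n × Fin n // p.1 < p.2}) :=
  SimpleGraph.fromRel (fun u v =>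
    match u, v with
    | Sum.inl i, Sum.inr p => i = p.1.1 ∨ i = p.1.2
    | _, _ => False)

/-- `C` is quasi-wide: for every radius `r` there are `k` and `f : ℕ → ℕ` such that in
any member of `C` of size at least `f m` one can delete at most `k` vertices so that the
rest contains an `r`-independent set of size `m` (any walk between two distinct chosen
vertices avoiding the deleted set has length greater than `r`). -/
def QuasiWide (C : Set BG) : Prop :=
  ∀ r : ℕ, ∃ (k : ℕ) (f : ℕ → ℕ), ∀ (m : ℕ), ∀ A ∈ C, f m ≤ Fintype.card A.V →
    ∃ (S : Finset A.V) (B : Finset A.V), Disjoint S B ∧ S.card ≤ k ∧ m ≤ B.card ∧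
      ∀ u ∈ B, ∀ v ∈ B, u ≠ v →
        ∀ p : A.G.Walk u v, (∀ x ∈ p.support, x ∉ S) → r < p.length

namespace SimpleGraph

variable {V : Type*} (G : SimpleGraph V)

def ReachAvoiding (S : Set V) (r : ℕ) (u v : V) : Prop :=
  ∃ p : G.Walk u v, p.length ≤ r ∧ ∀ x ∈ p.support, x ∉ S

variable {G} {S : Set V} {r r' : ℕ} {u v w : V}

namespace ReachAvoiding

theorem refl (hu : u ∉ S) : G.ReachAvoiding S 0 u u :=
  ⟨.nil, le_rfl, by simpa⟩

theorem of_adj (h : G.Adj u v) (hu : u ∉ S) (hv : v ∉ S) : G.ReachAvoiding S 1 u v :=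
  ⟨h.toWalk, by simp, by simp [hu, hv]⟩

theorem mono (h : G.ReachAvoiding S r u v) (hr : r ≤ r') : G.ReachAvoiding S r' u v :=
  let ⟨p, hp, hpS⟩ := h
  ⟨p, hp.trans hr, hpS⟩

theorem symm (h : G.ReachAvoiding S r u v) : G.ReachAvoiding S r v u :=
  let ⟨p, hp, hpS⟩ := h
  ⟨p.reverse, by simpa, by simpa⟩

theorem trans (h₁ : G.ReachAvoiding S r u v) (h₂ : G.ReachAvoiding S r' v w) :
    G.ReachAvoiding S (r + r') u w := by
  obtain ⟨p, hp, hpS⟩ := h₁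
  obtain ⟨q, hq, hqS⟩ := h₂
  refine ⟨p.append q, by rw [Walk.length_append]; omega, fun x hx => ?_⟩
  rcases (Walk.mem_support_append_iff p q).mp hx with hx | hx
  exacts [hpS x hx, hqS x hx]

end ReachAvoiding

end SimpleGraph

open SimpleGraph
open scoped Finset

def EmbedsInto (C : Set BG) {V : Type} (G : SimpleGraph V) : Prop :=
  ∃ A ∈ C, Nonempty (G ↪g A.G)

section EmbedsInto

variable {C : Set BG} {V : Type} {G : SimpleGraph V}

theorem embedsInto_induce_of_subsingleton (hC : ∃ A ∈ C, Nonempty A.V) {s : Set V}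
    (hs : s.Subsingleton) : EmbedsInto C (G.induce s) := by
  obtain ⟨A, hA, ⟨a⟩⟩ := hC
  have : Subsingleton s := hs.coe_sort
  exact ⟨A, hA, ⟨⟨⟨fun _ => a, fun x y _ => Subsingleton.elim x y⟩,
    fun {x y} => by simp [Subsingleton.elim x y]⟩⟩⟩

theorem embedsInto_induce_pair (hedge : ∃ A ∈ C, ∃ a b, A.G.Adj a b) {u v : V}
    (huv : G.Adj u v) : EmbedsInto C (G.induce {u, v}) := by
  classical
  obtain ⟨A, hA, a, b, hab⟩ := hedge
  refine ⟨A, hA, ⟨⟨⟨fun x => if x.1 = u then a else b, ?_⟩, fun {x y} => ?_⟩⟩⟩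
  · rintro ⟨x, rfl | rfl⟩ ⟨y, rfl | rfl⟩ h <;> simp_all [huv.ne, hab.ne, eq_comm]
  · show A.G.Adj (if x.1 = u then a else b) (if y.1 = u then a else b) ↔ G.Adj x y
    rcases x with ⟨x, rfl | rfl⟩ <;> rcases y with ⟨y, rfl | rfl⟩ <;>
      simp [huv.ne', huv, huv.symm, hab, hab.symm]

theorem exists_embedding_induce_union {W : Type} {H : SimpleGraph W} {s t : Set V}
    (fs : G.induce s ↪g H) (ft : G.induce t ↪g H)
    (hagree : ∀ v (hs : v ∈ s) (ht : v ∈ t), fs ⟨v, hs⟩ = ft ⟨v, ht⟩)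
    (hne : ∀ u (hu : u ∈ s), u ∉ t → ∀ v (hv : v ∈ t), v ∉ s → fs ⟨u, hu⟩ ≠ ft ⟨v, hv⟩)
    (hadj : ∀ u (hu : u ∈ s), u ∉ t → ∀ v (hv : v ∈ t), v ∉ s →
      (H.Adj (fs ⟨u, hu⟩) (ft ⟨v, hv⟩) ↔ G.Adj u v)) :
    Nonempty (G.induce (s ∪ t) ↪g H) := by
  classical
  let Φ : ↥(s ∪ t) → W := fun x =>
    if h : x.1 ∈ s then fs ⟨x, h⟩ else ft ⟨x, x.2.resolve_left h⟩
  have hΦs (x : ↥(s ∪ t)) (h : x.1 ∈ s) : Φ x = fs ⟨x, h⟩ := dif_pos h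
  have hΦt (x : ↥(s ∪ t)) (h : x.1 ∈ t) : Φ x = ft ⟨x, h⟩ := by
    by_cases hxs : x.1 ∈ s
    · exact (hΦs x hxs).trans (hagree x hxs h)
    · exact dif_neg hxs
  have hcases (x y : ↥(s ∪ t)) : (x.1 ∈ s ∧ y.1 ∈ s) ∨ (x.1 ∈ t ∧ y.1 ∈ t) ∨
      (x.1 ∈ s ∧ x.1 ∉ t ∧ y.1 ∈ t ∧ y.1 ∉ s) ∨ (y.1 ∈ s ∧ y.1 ∉ t ∧ x.1 ∈ t ∧ x.1 ∉ s) := by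
    have := x.2; have := y.2; simp only [Set.mem_union] at *; tauto
  refine ⟨⟨⟨Φ, fun x y h => ?_⟩, fun {x y} => ?_⟩⟩
  · rcases hcases x y with ⟨hx, hy⟩ | ⟨hx, hy⟩ | ⟨hx, hxt, hy, hys⟩ | ⟨hy, hyt, hx, hxs⟩
    · rw [hΦs x hx, hΦs y hy] at h
      exact Subtype.ext (congrArg Subtype.val (fs.injective h) :)
    · rw [hΦt x hx, hΦt y hy] at h
      exact Subtype.ext (congrArg Subtype.val (ft.injective h) :)
    · exact absurd (by rwa [hΦs x hx, hΦt y hy] at h) (hne x hx hxt y hy hys)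
    · exact absurd (by rwa [hΦs y hy, hΦt x hx] at h) (hne y hy hyt x hx hxs).symm
  · show H.Adj (Φ x) (Φ y) ↔ G.Adj x y
    rcases hcases x y with ⟨hx, hy⟩ | ⟨hx, hy⟩ | ⟨hx, hxt, hy, hys⟩ | ⟨hy, hyt, hx, hxs⟩
    · rw [hΦs x hx, hΦs y hy, fs.map_adj_iff]; rfl
    · rw [hΦt x hx, hΦt y hy, ft.map_adj_iff]; rfl
    · rw [hΦs x hx, hΦt y hy]
      exact hadj x hx hxt y hy hys
    · rw [hΦs y hy, hΦt x hx, H.adj_comm, G.adj_comm]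
      exact hadj y hy hyt x hx hxs

theorem FreeAmalgamationClosed.embedsInto_induce_union (hamal : FreeAmalgamationClosed C)
    {s t : Set V} (hs : EmbedsInto C (G.induce s)) (ht : EmbedsInto C (G.induce t))
    (hst : ∀ u ∈ s, u ∉ t → ∀ v ∈ t, v ∉ s → ¬ G.Adj u v) :
    EmbedsInto C (G.induce (s ∪ t)) := by
  obtain ⟨A, hA, ⟨φ⟩⟩ := hs
  obtain ⟨B, hB, ⟨ψ⟩⟩ := ht
  obtain ⟨D, hD, jA, jB, hglue, -, hinter, hcross⟩ :=
    hamal A hA B hB ↥(s ∩ t) (fun x => φ ⟨x, x.2.1⟩) (fun x => ψ ⟨x, x.2.2⟩)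
      (fun x y h => Subtype.ext (congrArg Subtype.val (φ.injective h) :))
      (fun x y h => Subtype.ext (congrArg Subtype.val (ψ.injective h) :))
      (fun x y => by rw [φ.map_adj_iff, ψ.map_adj_iff]; rfl)
  refine ⟨D, hD, exists_embedding_induce_union (jA.comp φ) (jB.comp ψ)
    (fun v hs ht => hglue ⟨v, hs, ht⟩) (fun u hu _ v hv hvs h => ?_)
    (fun u hu hut v hv hvs => iff_of_false (fun h => ?_) (hst u hu hut v hv hvs))⟩
  · obtain ⟨c, -, hc⟩ := hinter _ _ h
    have hvc : v = c := congrArg Subtype.val (ψ.injective hc)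
    exact hvs (hvc ▸ c.2.1)
  · rcases hcross _ _ h with ⟨c, hc⟩ | ⟨c, hc⟩
    · have huc : u = c := congrArg Subtype.val (φ.injective hc)
      exact hut (huc ▸ c.2.2)
    · have hvc : v = c := congrArg Subtype.val (ψ.injective hc)
      exact hvs (hvc ▸ c.2.1)

theorem FreeAmalgamationClosed.embedsInto_induce_of_isIndepSet
    (hamal : FreeAmalgamationClosed C) (hC : ∃ A ∈ C, Nonempty A.V) {s : Set V}
    (hfin : s.Finite) (hs : G.IsIndepSet s) : EmbedsInto C (G.induce s) := by
  induction s, hfin using Set.Finite.induction_on with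
  | empty => exact embedsInto_induce_of_subsingleton hC Set.subsingleton_empty
  | @insert v s hvs hfin ih =>
    rw [Set.insert_eq]
    refine hamal.embedsInto_induce_union (embedsInto_induce_of_subsingleton hC
      Set.subsingleton_singleton) (ih (hs.mono (Set.subset_insert _ _))) ?_
    rintro u rfl - w hw hwv
    exact hs (Set.mem_insert u _) (Set.mem_insert_of_mem u hw) (Ne.symm hwv)

theorem FreeAmalgamationClosed.embedsInto_induce_path (hamal : FreeAmalgamationClosed C)
    (hedge : ∃ A ∈ C, ∃ a b, A.G.Adj a b) {u x v : V} (hux : G.Adj u x) (hxv : G.Adj x v)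
    (huv : ¬ G.Adj u v) : EmbedsInto C (G.induce {u, x, v}) := by
  have hunion : ({u, x} ∪ {x, v} : Set V) = {u, x, v} := by
    ext; simp only [Set.mem_union, Set.mem_insert_iff, Set.mem_singleton_iff]; tauto
  rw [← hunion]
  refine hamal.embedsInto_induce_union (embedsInto_induce_pair hedge hux)
    (embedsInto_induce_pair hedge hxv) ?_
  simp only [Set.mem_insert_iff, Set.mem_singleton_iff]
  rintro _ (rfl | rfl) hu' _ (rfl | rfl) hv'
  all_goals first | exact absurd (Or.inl rfl) hu' | exact absurd (Or.inr rfl) hv' | exact huv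

end EmbedsInto

abbrev OrderedPair (n : ℕ) := {p : Fin n × Fin n // p.1 < p.2}

section Subdivision

variable {n : ℕ}

@[simp] theorem subdivK_adj_inl_inl (i j : Fin n) : ¬ (subdivK n).Adj (.inl i) (.inl j) := by
  simp [subdivK]

@[simp] theorem subdivK_adj_inr_inr (p q : OrderedPair n) :
    ¬ (subdivK n).Adj (.inr p) (.inr q) := by
  simp [subdivK]

@[simp] theorem subdivK_adj_inl_inr (i : Fin n) (p : OrderedPair n) :
    (subdivK n).Adj (.inl i) (.inr p) ↔ i = p.1.1 ∨ i = p.1.2 := by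
  simp [subdivK]

@[simp] theorem subdivK_adj_inr_inl (i : Fin n) (p : OrderedPair n) :
    (subdivK n).Adj (.inr p) (.inl i) ↔ i = p.1.1 ∨ i = p.1.2 := by
  rw [SimpleGraph.adj_comm, subdivK_adj_inl_inr]

theorem FreeAmalgamationClosed.embedsInto_subdivK_induce {C : Set BG}
    (hamal : FreeAmalgamationClosed C) (hedge : ∃ A ∈ C, ∃ u v, A.G.Adj u v)
    (E : Finset (OrderedPair n)) :
    EmbedsInto C ((subdivK n).induce (Set.range Sum.inl ∪ Sum.inr '' E)) := by
  classical
  induction E using Finset.induction_on with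
  | empty =>
    have hC : ∃ A ∈ C, Nonempty A.V := by
      obtain ⟨A, hA, a, -⟩ := hedge
      exact ⟨A, hA, ⟨a⟩⟩
    refine hamal.embedsInto_induce_of_isIndepSet hC (by simpa using Set.finite_range _) ?_
    rintro (i | p) hp (j | q) hq - <;> simp_all
  | insert p E hpE ih =>
    have hpath := hamal.embedsInto_induce_path hedge (G := subdivK n) (u := .inl p.1.1)
      (x := .inr p) (v := .inl p.1.2) (by simp) (by simp) (by simp)
    have hunion : Set.range Sum.inl ∪ Sum.inr '' ↑(insert p E) =
        (Set.range Sum.inl ∪ Sum.inr '' E) ∪ {.inl p.1.1, .inr p, .inl p.1.2} := by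
      ext (i | q) <;> simp [or_comm]
    rw [hunion]
    refine hamal.embedsInto_induce_union ih hpath ?_
    rintro u - hu v hv hvE
    rcases v with j | q
    · exact absurd (Or.inl ⟨j, rfl⟩) hvE
    obtain rfl : q = p := by simpa using hv
    rcases u with i | r
    · simpa using hu
    · exact subdivK_adj_inr_inr r q

theorem subdivK_mem {C : Set BG} (hher : GHereditary C) (hamal : FreeAmalgamationClosed C)
    (hedge : ∃ A ∈ C, ∃ u v, A.G.Adj u v) (n : ℕ) : (⟨_, subdivK n⟩ : BG) ∈ C := by
  obtain ⟨A, hA, ⟨φ⟩⟩ :=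
    hamal.embedsInto_subdivK_induce hedge (Finset.univ : Finset (OrderedPair n))
  rw [Finset.coe_univ, Set.image_univ, Set.range_inl_union_range_inr] at φ
  exact hher A hA _ _ (φ.comp (induceUnivIso _).symm.toEmbedding)

/-- The middle vertex of the path from `inl i` to `inl j`; for `i = j` it is `inl i` itself. -/
def subdivMid (i j : Fin n) : Fin n ⊕ OrderedPair n :=
  if h : i < j then .inr ⟨(i, j), h⟩ else if h' : j < i then .inr ⟨(j, i), h'⟩ else .inl i

theorem subdivMid_self (i : Fin n) : subdivMid i i = .inl i := by
  simp [subdivMid]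

theorem subdivMid_comm (i j : Fin n) : subdivMid i j = subdivMid j i := by
  unfold subdivMid
  split_ifs with h₁ h₂ h₃
  · exact absurd h₁ (lt_asymm h₂)
  · rfl
  · rfl
  · exact congrArg Sum.inl (le_antisymm (not_lt.mp h₃) (not_lt.mp h₁))

theorem subdivMid_injective (i : Fin n) : Function.Injective (subdivMid i) := by
  intro j j' h
  unfold subdivMid at h
  split_ifs at h <;> simp_all [Fin.ext_iff]
  omega

theorem subdivK_adj_subdivMid {i j : Fin n} (h : i ≠ j) :
    (subdivK n).Adj (.inl i) (subdivMid i j) := by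
  unfold subdivMid
  split_ifs <;> simp_all [le_antisymm_iff]

theorem reachAvoiding_subdivMid {S : Set (Fin n ⊕ OrderedPair n)} {i j : Fin n}
    (hi : .inl i ∉ S) (hj : .inl j ∉ S) (hij : subdivMid i j ∉ S) :
    (subdivK n).ReachAvoiding S 2 (.inl i) (.inl j) := by
  rcases eq_or_ne i j with rfl | h
  · exact (ReachAvoiding.refl hi).mono (Nat.zero_le 2)
  · have hji : (subdivK n).Adj (.inl j) (subdivMid i j) := by
      rw [subdivMid_comm]; exact subdivK_adj_subdivMid h.symm
    exact (ReachAvoiding.of_adj (subdivK_adj_subdivMid h) hi hij).trans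
      (ReachAvoiding.of_adj hji hj hij).symm

/-- A branch vertex equal or adjacent to `b`, taken outside `S` whenever `b` has one. -/
def subdivAnchor (S : Finset (Fin n ⊕ OrderedPair n)) : Fin n ⊕ OrderedPair n → Fin n
  | .inl i => i
  | .inr p => if .inl p.1.1 ∈ S then p.1.2 else p.1.1

theorem reachAvoiding_subdivAnchor {S : Finset (Fin n ⊕ OrderedPair n)}
    {b : Fin n ⊕ OrderedPair n} (hb : b ∉ S) (hS : .inl (subdivAnchor S b) ∉ S) :
    (subdivK n).ReachAvoiding S 1 b (.inl (subdivAnchor S b)) := by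
  rcases b with i | p
  · exact (ReachAvoiding.refl hb).mono zero_le_one
  · refine ReachAvoiding.of_adj ?_ hb hS
    simp only [subdivAnchor]
    split_ifs <;> simp

theorem card_filter_subdivAnchor_mem_le {S B : Finset (Fin n ⊕ OrderedPair n)}
    (hSB : Disjoint S B) : #(B.filter fun b => .inl (subdivAnchor S b) ∈ S) ≤ #S * #S := by
  let ends : Fin n ⊕ OrderedPair n → (Fin n ⊕ OrderedPair n) × (Fin n ⊕ OrderedPair n) :=
    Sum.elim (fun i => (.inl i, .inl i)) (fun p => (.inl p.1.1, .inl p.1.2))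
  have hends : Function.Injective ends := by
    rintro (i | p) (j | q) h <;> simp [ends] at h
    · simp [h]
    · exact absurd (h.1.symm.trans h.2) q.2.ne
    · exact absurd (h.1.trans h.2.symm) p.2.ne
    · exact congrArg Sum.inr (Subtype.ext (Prod.ext h.1 h.2))
  rw [← Finset.card_product]
  refine Finset.card_le_card_of_injOn ends (fun b hb => ?_) hends.injOn
  obtain ⟨hbB, hbS⟩ := Finset.mem_filter.mp hb
  rcases b with i | p
  · exact absurd hbS (Finset.disjoint_right.mp hSB hbB)
  · simp only [subdivAnchor] at hbS
    split_ifs at hbS with h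
    · exact Finset.mem_product.mpr ⟨h, hbS⟩
    · exact absurd hbS h

theorem exists_ne_subdivMid_notMem {α : Type*} {π : α → Fin n}
    {S : Finset (Fin n ⊕ OrderedPair n)} {T : Finset α} (hT : #S + 2 ≤ #T)
    (hπ : ∀ b ∈ T, .inl (π b) ∉ S) :
    ∃ b₁ ∈ T, ∃ b₂ ∈ T, b₁ ≠ b₂ ∧ subdivMid (π b₁) (π b₂) ∉ S := by
  classical
  obtain ⟨b₀, hb₀⟩ : T.Nonempty := Finset.card_pos.mp (by omega)
  -- If every midpoint lies in `S`, pigeonhole on the midpoints seen from `b₀` gives two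
  -- elements with equal anchors, and their midpoint is that anchor, which is not in `S`.
  by_contra! hmid
  have hcard : #S < #(T.erase b₀) := by rw [Finset.card_erase_of_mem hb₀]; omega
  obtain ⟨b₁, hb₁, b₂, hb₂, hne, heq⟩ := Finset.exists_ne_map_eq_of_card_lt_of_maps_to hcard
    (f := fun b => subdivMid (π b₀) (π b))
    (fun b hb => hmid b₀ hb₀ b (Finset.mem_of_mem_erase hb) (Finset.ne_of_mem_erase hb).symm)
  have hmid₁₂ := hmid b₁ (Finset.mem_of_mem_erase hb₁) b₂ (Finset.mem_of_mem_erase hb₂) hne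
  rw [subdivMid_injective _ heq, subdivMid_self] at hmid₁₂
  exact hπ b₂ (Finset.mem_of_mem_erase hb₂) hmid₁₂

theorem subdivK_exists_reachAvoiding {S B : Finset (Fin n ⊕ OrderedPair n)}
    (hSB : Disjoint S B) (hB : #S * #S + #S + 2 ≤ #B) :
    ∃ u ∈ B, ∃ v ∈ B, u ≠ v ∧ (subdivK n).ReachAvoiding S 4 u v := by
  classical
  set T := B.filter fun b => .inl (subdivAnchor S b) ∉ S
  have hT : #S + 2 ≤ #T := by
    have hsplit : #(B.filter fun b => .inl (subdivAnchor S b) ∈ S) + #T = #B :=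
      Finset.card_filter_add_card_filter_not _
    have hbad := card_filter_subdivAnchor_mem_le hSB
    omega
  have hnear (b) (hb : b ∈ T) : (subdivK n).ReachAvoiding S 1 b (.inl (subdivAnchor S b)) :=
    reachAvoiding_subdivAnchor (Finset.disjoint_right.mp hSB (Finset.mem_filter.mp hb).1)
      (Finset.mem_filter.mp hb).2
  obtain ⟨b₁, hb₁, b₂, hb₂, hne, hmid⟩ :=
    exists_ne_subdivMid_notMem hT (fun b hb => (Finset.mem_filter.mp hb).2)
  refine ⟨b₁, (Finset.mem_filter.mp hb₁).1, b₂, (Finset.mem_filter.mp hb₂).1, hne, ?_⟩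
  exact ((hnear b₁ hb₁).trans (reachAvoiding_subdivMid (Finset.mem_filter.mp hb₁).2
    (Finset.mem_filter.mp hb₂).2 hmid)).trans (hnear b₂ hb₂).symm

end Subdivision

theorem not_quasiWide_of_forall_subdivK_mem {C : Set BG}
    (hC : ∀ n, (⟨_, subdivK n⟩ : BG) ∈ C) : ¬ QuasiWide C := by
  intro hqw
  obtain ⟨k, f, hk⟩ := hqw 4
  set m := k * k + k + 2 with hm
  have hcard : f m ≤ Fintype.card (Fin (f m) ⊕ OrderedPair (f m)) := by
    simp [Fintype.card_sum]
  obtain ⟨S, B, hSB, hS, hB, hfar⟩ := hk m _ (hC (f m)) hcard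
  obtain ⟨u, hu, v, hv, huv, p, hp, hpS⟩ :=
    subdivK_exists_reachAvoiding hSB (by nlinarith [Nat.mul_le_mul hS hS])
  exact (hfar u hu v hv huv p hpS).not_ge hp

/-- Every hereditary class of finite graphs closed under free
amalgamation over arbitrary vertex subsets which contains a graph with at least one edge
contains, for every `n`, the 1-subdivision of `K n` (up to isomorphism); consequently
such a class is not quasi-wide. -/
theorem amalgamation_closed_contains_subdivided_cliques (C : Set BG)
    (hher : GHereditary C) (hamal : FreeAmalgamationClosed C)
    (hedge : ∃ A ∈ C, ∃ u v, A.G.Adj u v) :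
    (∀ n : ℕ, ∃ D ∈ C, Nonempty (subdivK n ≃g D.G)) ∧ ¬ QuasiWide C := by
  have hmem := subdivK_mem hher hamal hedge
  exact ⟨fun n => ⟨_, hmem n, ⟨.refl⟩⟩, not_quasiWide_of_forall_subdivK_mem hmem⟩
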